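/- arXiv:1605.09431 — 2 statements merged into one kernel-verified Lean document; each statement's English description precedes it below -/
import Mathlib

section
/- Let d ≥ 3 and let Λ be a full-rank lattice in ℝ^d. Suppose the dual lattice Λ* contains a nonzero point u = (u_1,…,u_{d-1},0) with last coordinate zero. Then ω(Λ) ≥ 1/(d(d-2)): there are infinitely many nonzero v ∈ Λ and a constant c > 0 such that Π(v) ≤ c |v|^{-1/(d(d-2))}. -/
/-!
The hyperplane `u^⊥` contains the last coordinate axis. Pick `k` with `u k ≠ 0`. Dirichlet's box
principle, applied to the `(T+1)^d` lattice points `∑ zᵢ Bᵢ` with `0 ≤ zᵢ ≤ T ≍ t^(d-2)` and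
sorted by the integer `⟨u, ·⟩` and by boxes of side `≍ 1/t` in the `d - 2` coordinates other than
`k` and the last one, gives nonzero `v ∈ Λ ∩ u^⊥` whose coordinates other than `k` and the last
are `O(1/t)`, with `|v| = O(t^(d-2))`; then `⟨u, v⟩ = 0` bounds `v_k` as well. So
`∏ |vᵢ| = O(1/t) = O(|v|^(-1/(d-2)))`. These `v` are infinitely many, unless `Λ` has a nonzero
point with vanishing `k`-th coordinate, whose multiples all have `Π = 0`. Since `Λ` is discrete,
infinitely many solutions for the exponent `γ` give solutions for every smaller exponent, hence
`ω(Λ) ≥ γ`.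
-/

open scoped BigOperators

/-- `Π(x) = (∏ i |x_i|)^{1/d}` : the geometric-mean-type product function. -/
noncomputable def piProd (d : ℕ) (x : Fin d → ℝ) : ℝ :=
  (∏ i, |x i|) ^ ((1 : ℝ) / d)

/-- A full-rank lattice in `ℝ^d`: the set of ℤ-linear combinations of an ℝ-basis. -/
def IsFullLattice {d : ℕ} (L : Set (Fin d → ℝ)) : Prop :=
  ∃ B : Module.Basis (Fin d) ℝ (Fin d → ℝ),
    L = {x | ∃ z : Fin d → ℤ, x = ∑ i, (z i : ℝ) • B i}

/-- The Diophantine exponent `ω(Λ)`, as an extended real number: the supremum of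
all `γ : ℝ` such that `Π(x) ≤ |x|^{-γ}` has infinitely many solutions `x ∈ Λ \ {0}`
(the norm on `Fin d → ℝ` is the sup-norm). -/
noncomputable def omegaExp {d : ℕ} (L : Set (Fin d → ℝ)) : EReal :=
  sSup {e : EReal | ∃ γ : ℝ, e = (γ : EReal) ∧
    {x | x ∈ L ∧ x ≠ 0 ∧ piProd d x ≤ ‖x‖ ^ (-γ)}.Infinite}

/-- The dual lattice `Λ* = {y | ⟨y,x⟩ ∈ ℤ for all x ∈ Λ}`. -/
def dualLattice {d : ℕ} (L : Set (Fin d → ℝ)) : Set (Fin d → ℝ) :=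
  {y | ∀ x ∈ L, ∃ n : ℤ, (∑ i, y i * x i) = (n : ℝ)}

open Finset Submodule

theorem exists_ne_eq_abs_sub_lt_of_card_lt {α β ι : Type*} [Fintype ι] [DecidableEq β]
    {A : Finset α} {F : Finset β} {f : α → β} {g : α → ι → ℝ} {s : ℝ} {n : ℕ} (hs : 0 < s)
    (hf : ∀ a ∈ A, f a ∈ F) (hg : ∀ a ∈ A, ∀ i, |g a i| ≤ n * s)
    (hcard : #F * (2 * n + 1) ^ Fintype.card ι < #A) :
    ∃ a ∈ A, ∃ b ∈ A, a ≠ b ∧ f a = f b ∧ ∀ i, |g a i - g b i| < s := by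
  classical
  set cells := F ×ˢ Fintype.piFinset fun _ : ι => Icc (-(n : ℤ)) n
  have hcells : #cells < #A := by
    rwa [card_product, Fintype.card_piFinset, prod_const, Int.card_Icc, card_univ,
      show (n + 1 - -n : ℤ).toNat = 2 * n + 1 by omega]
  have hmaps : Set.MapsTo (fun a => (f a, fun i => ⌊g a i / s⌋)) A cells := by
    intro a ha
    simp only [cells, coe_product, Set.mem_prod, mem_coe, Fintype.mem_piFinset, mem_Icc]
    refine ⟨hf a ha, fun i => ⟨Int.le_floor.mpr ?_, Int.floor_le_iff.mpr ?_⟩⟩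
    · rw [Int.cast_neg, Int.cast_natCast, le_div_iff₀ hs]
      linarith [neg_abs_le (g a i), hg a ha i]
    · rw [Int.cast_natCast, div_lt_iff₀ hs]
      linarith [le_abs_self (g a i), hg a ha i]
  obtain ⟨a, ha, b, hb, hab, hcell⟩ := exists_ne_map_eq_of_card_lt_of_maps_to hcells hmaps
  obtain ⟨hfab, hgab⟩ := Prod.ext_iff.mp hcell
  refine ⟨a, ha, b, hb, hab, hfab, fun i => ?_⟩
  have h := Int.abs_sub_lt_one_of_floor_eq_floor (congrFun hgab i)
  rwa [div_sub_div_same, abs_div, abs_of_pos hs, div_lt_one hs] at h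

-- The count of the box principle: `2TM + 1` values of `⟨u, ·⟩` times `(2t^(p+1) + 1)^p` boxes
-- against `(T + 1)^(p+2)` points, for `T = (3Mt)^p`.
theorem two_mul_add_one_mul_pow_lt {M t p : ℕ} (hM : 1 ≤ M) (ht : 1 ≤ t) (hp : 1 ≤ p) :
    (2 * ((3 * M * t) ^ p * M) + 1) * (2 * t ^ (p + 1) + 1) ^ p
      < ((3 * M * t) ^ p + 1) ^ (p + 2) := by
  set T := (3 * M * t) ^ p
  have hT : 1 ≤ T := Nat.one_le_pow _ _ (by positivity)
  have hM3 : 3 ^ (p + 1) * M ≤ (3 * M) ^ (p * (p + 1)) :=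
    calc 3 ^ (p + 1) * M ≤ 3 ^ (p + 1) * M ^ (p + 1) := by gcongr; exact Nat.le_self_pow (by omega) M
      _ = (3 * M) ^ (p + 1) := (mul_pow 3 M _).symm
      _ ≤ (3 * M) ^ (p * (p + 1)) := Nat.pow_le_pow_right (by omega) (by nlinarith)
  calc (2 * (T * M) + 1) * (2 * t ^ (p + 1) + 1) ^ p
      ≤ (3 * (T * M)) * (3 * t ^ (p + 1)) ^ p := by
        gcongr
        · nlinarith
        · nlinarith [Nat.one_le_pow (p + 1) t ht]
    _ = T * (3 ^ (p + 1) * M * t ^ ((p + 1) * p)) := by rw [mul_pow, ← pow_mul]; ring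
    _ ≤ T * ((3 * M) ^ (p * (p + 1)) * t ^ (p * (p + 1))) := by
        rw [mul_comm (p + 1) p]; gcongr
    _ = T ^ (p + 2) := by rw [← mul_pow, pow_mul]; ring
    _ < (T + 1) ^ (p + 2) := Nat.pow_lt_pow_left (by omega) (by omega)

theorem norm_sum_zsmul_le {ι E : Type*} [Fintype ι] [SeminormedAddCommGroup E] (v : ι → E)
    {z : ι → ℤ} {T : ℤ} (hz : ∀ i, |z i| ≤ T) : ‖∑ i, z i • v i‖ ≤ T * ∑ i, ‖v i‖ := by
  rw [mul_sum]
  refine (norm_sum_le _ _).trans (sum_le_sum fun i _ => ?_)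
  calc ‖z i • v i‖ ≤ ‖z i‖ * ‖v i‖ := norm_zsmul_le _ _
    _ ≤ T * ‖v i‖ := by
        gcongr
        rw [Int.norm_eq_abs]; exact_mod_cast hz i

theorem abs_apply_le_of_dotProduct_eq_zero {ι : Type*} [Fintype ι] {u v : ι → ℝ} {k : ι} {s : ℝ}
    (h : u ⬝ᵥ v = 0) (hk : u k ≠ 0) (hs : 0 ≤ s) (hv : ∀ j ≠ k, u j ≠ 0 → |v j| ≤ s) :
    |v k| ≤ (∑ j, |u j|) / |u k| * s := by
  classical
  rw [div_mul_eq_mul_div, le_div_iff₀ (abs_pos.mpr hk), mul_comm, ← abs_mul]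
  have hsplit : u k * v k = -∑ j ∈ univ.erase k, u j * v j := by
    rw [dotProduct, ← add_sum_erase _ _ (mem_univ k)] at h
    linarith
  calc |u k * v k| ≤ ∑ j ∈ univ.erase k, |u j * v j| := by
        rw [hsplit, abs_neg]; exact abs_sum_le_sum_abs _ _
    _ ≤ ∑ j ∈ univ.erase k, |u j| * s := by
        refine sum_le_sum fun j hj => ?_
        rw [abs_mul]
        by_cases hj0 : u j = 0
        · simp [hj0]
        · exact mul_le_mul_of_nonneg_left (hv j (ne_of_mem_erase hj) hj0) (abs_nonneg _)
    _ ≤ (∑ j, |u j|) * s := by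
        rw [← sum_mul]
        gcongr
        exact erase_subset _ _

theorem abs_sum_mul_le {ι : Type*} [Fintype ι] {z m : ι → ℤ} {T M : ℤ} (hT : 0 ≤ T)
    (hz : ∀ i, |z i| ≤ T) (hm : ∑ i, |m i| ≤ M) : |∑ i, z i * m i| ≤ T * M :=
  calc |∑ i, z i * m i| ≤ ∑ i, |z i| * |m i| := by
        simpa only [abs_mul] using abs_sum_le_sum_abs (fun i => z i * m i) univ
    _ ≤ ∑ i, T * |m i| := by gcongr with i; exact hz i
    _ ≤ T * M := by rw [← mul_sum]; gcongr

theorem dotProduct_fintypeLinearCombination {ι κ : Type*} [Fintype ι] [Fintype κ] (u : κ → ℝ)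
    (b : ι → κ → ℝ) (z : ι → ℤ) :
    u ⬝ᵥ Fintype.linearCombination ℤ b z = ∑ i, z i * (u ⬝ᵥ b i) := by
  rw [Fintype.linearCombination_apply, dotProduct_sum]
  exact sum_congr rfl fun i _ => by rw [dotProduct_smul, zsmul_eq_mul]

theorem Fintype.card_subtype_ne_and_ne {α : Type*} [Fintype α] [DecidableEq α] {k l : α}
    (hkl : k ≠ l) : Fintype.card {i // i ≠ k ∧ i ≠ l} = Fintype.card α - 2 := by
  rw [Fintype.card_subtype, show ({i | i ≠ k ∧ i ≠ l} : Finset α) = ({k, l} : Finset α)ᶜ by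
    ext; simp, card_compl, card_pair hkl]

theorem IsFullLattice.exists_basis_eq_span {d : ℕ} {L : Set (Fin d → ℝ)} (hL : IsFullLattice L) :
    ∃ B : Module.Basis (Fin d) ℝ (Fin d → ℝ), L = span ℤ (Set.range B) := by
  obtain ⟨B, rfl⟩ := hL
  refine ⟨B, Set.ext fun x => ?_⟩
  simp only [Set.mem_ofPred_eq, SetLike.mem_coe, mem_span_range_iff_exists_fun,
    Int.cast_smul_eq_zsmul]
  exact exists_congr fun z => eq_comm

section Dirichlet

variable {d : ℕ} (B : Module.Basis (Fin d) ℝ (Fin d → ℝ))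

theorem exists_mem_span_dotProduct_eq_zero (hd : 3 ≤ d) {u : Fin d → ℝ} {m : Fin d → ℤ}
    (hm : ∀ i, u ⬝ᵥ B i = m i) {M : ℕ} (hM : 1 ≤ M) (hmM : ∑ i, |m i| ≤ M) {k l : Fin d}
    (hkl : k ≠ l) {t : ℕ} (ht : 1 ≤ t) :
    ∃ v ∈ span ℤ (Set.range B), v ≠ 0 ∧ u ⬝ᵥ v = 0 ∧
      (∀ i, i ≠ k → i ≠ l → |v i| ≤ (∑ j, ‖B j‖) * (3 * M) ^ (d - 2) / t) ∧
      ‖v‖ ≤ 2 * ((∑ j, ‖B j‖) * (3 * M) ^ (d - 2)) * t ^ (d - 2) := by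
  classical
  set T : ℕ := (3 * M * t) ^ (d - 2)
  set C : ℝ := ∑ j, ‖B j‖
  set s : ℝ := C * (3 * M) ^ (d - 2) / t
  set φ := Fintype.linearCombination ℤ B
  have hφ : Function.Injective φ :=
    linearIndependent_iff_injective_fintypeLinearCombination.mp
      (B.linearIndependent.restrict_scalars' ℤ)
  have hdot (z : Fin d → ℤ) : u ⬝ᵥ φ z = ((∑ i, z i * m i : ℤ) : ℝ) := by
    simp only [φ, dotProduct_fintypeLinearCombination, hm, Int.cast_sum, Int.cast_mul]
  set A := Fintype.piFinset fun _ : Fin d => Icc (0 : ℤ) T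
  have hA (z) (hz : z ∈ A) (i) : |z i| ≤ T := by
    obtain ⟨h0, hT⟩ := mem_Icc.mp (Fintype.mem_piFinset.mp hz i)
    rwa [abs_of_nonneg h0]
  have hφA (z) (hz : z ∈ A) : ‖φ z‖ ≤ T * C := by
    rw [Fintype.linearCombination_apply]
    exact_mod_cast norm_sum_zsmul_le B (hA z hz)
  have hs : 0 < s := by
    have : 0 < C := sum_pos (fun i _ => norm_pos_iff.mpr (B.ne_zero i)) ⟨k, mem_univ k⟩
    positivity
  have hTC : (T : ℝ) * C = (t ^ (d - 1) : ℕ) * s := by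
    rw [show d - 1 = d - 2 + 1 by omega]
    simp only [T, s]
    push_cast
    field_simp
    ring
  obtain ⟨x, hx, y, hy, hxy, hfxy, hgxy⟩ := exists_ne_eq_abs_sub_lt_of_card_lt
    (F := Icc (-(T * M : ℤ)) (T * M)) (f := fun z => ∑ i, z i * m i)
    (g := fun z (i : {i // i ≠ k ∧ i ≠ l}) => φ z i) (n := t ^ (d - 1)) hs
    (fun z hz => mem_Icc.mpr <| abs_le.mp <| abs_sum_mul_le (by positivity) (hA z hz) hmM)
    (fun z hz i => (norm_le_pi_norm (φ z) i).trans ((hφA z hz).trans hTC.le))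
    (by
      have key := two_mul_add_one_mul_pow_lt hM ht (p := d - 2) (by omega)
      rw [show d - 2 + 1 = d - 1 by omega, show d - 2 + 2 = d by omega] at key
      rwa [Int.card_Icc, Fintype.card_subtype_ne_and_ne hkl, Fintype.card_fin,
        Fintype.card_piFinset, prod_const, Int.card_Icc, card_univ, Fintype.card_fin,
        show ((T * M : ℤ) + 1 - -(T * M : ℤ)).toNat = 2 * (T * M) + 1 by omega,
        show ((T : ℤ) + 1 - 0).toNat = T + 1 by omega])
  refine ⟨φ (x - y), ?_, (map_ne_zero_iff φ hφ).mpr (sub_ne_zero.mpr hxy), ?_, ?_, ?_⟩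
  · rw [← Fintype.range_linearCombination]; exact LinearMap.mem_range_self φ _
  · rw [map_sub, dotProduct_sub, hdot, hdot, hfxy, sub_self]
  · intro i hik hil
    simpa only [map_sub, Pi.sub_apply] using (hgxy ⟨i, hik, hil⟩).le
  · calc ‖φ (x - y)‖ ≤ ‖φ x‖ + ‖φ y‖ := by rw [map_sub]; exact norm_sub_le _ _
      _ ≤ T * C + T * C := add_le_add (hφA x hx) (hφA y hy)
      _ = 2 * (C * (3 * M) ^ (d - 2)) * t ^ (d - 2) := by push_cast [T]; ring

theorem exists_forall_exists_mem_span_abs_apply_le (hd : 3 ≤ d) {u : Fin d → ℝ}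
    (hu : u ∈ dualLattice (span ℤ (Set.range B) : Set (Fin d → ℝ))) {k l : Fin d}
    (hk : u k ≠ 0) (hl : u l = 0) :
    ∃ a > 0, ∀ t : ℕ, 1 ≤ t → ∃ v ∈ span ℤ (Set.range B), v ≠ 0 ∧
      (∀ i ≠ l, |v i| ≤ a / t) ∧ ‖v‖ ≤ a * t ^ (d - 2) := by
  choose m hm using fun i => hu (B i) (subset_span (Set.mem_range_self i))
  have hkl : k ≠ l := fun h => hk (h ▸ hl)
  set M : ℕ := (∑ i, |m i|).toNat + 1
  set C : ℝ := (∑ j, ‖B j‖) * (3 * M) ^ (d - 2)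
  set w : ℝ := (∑ j, |u j|) / |u k|
  have hw : 1 ≤ w := (one_le_div (abs_pos.mpr hk)).mpr
    (single_le_sum (fun j _ => abs_nonneg (u j)) (mem_univ k))
  have hC : 0 < C := by
    have : 0 < ∑ j, ‖B j‖ := sum_pos (fun i _ => norm_pos_iff.mpr (B.ne_zero i)) ⟨k, mem_univ k⟩
    positivity
  refine ⟨w * (2 * C), by positivity, fun t ht => ?_⟩
  have ht' : (0 : ℝ) < t := by exact_mod_cast ht
  obtain ⟨v, hv, hv0, huv, hsmall, hnorm⟩ := exists_mem_span_dotProduct_eq_zero B hd hm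
    (M := M) (by omega) (by have := Int.self_le_toNat (∑ i, |m i|); omega) hkl ht
  have hvk : |v k| ≤ w * (C / t) := abs_apply_le_of_dotProduct_eq_zero huv hk (by positivity)
    fun i hik hi => hsmall i hik (by rintro rfl; exact hi hl)
  have hCt : C / t ≤ w * (C / t) := le_mul_of_one_le_left (by positivity) hw
  have hwC : w * (C / t) ≤ w * (2 * C) / t :=
    (le_mul_of_one_le_left (by positivity) one_le_two).trans_eq (by ring)
  refine ⟨v, hv, hv0, fun i hil => ?_, ?_⟩
  · rcases eq_or_ne i k with rfl | hik
    · exact hvk.trans hwC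
    · exact ((hsmall i hik hil).trans hCt).trans hwC
  · calc ‖v‖ ≤ 2 * C * t ^ (d - 2) := hnorm
      _ ≤ w * (2 * C) * t ^ (d - 2) :=
        mul_le_mul_of_nonneg_right (le_mul_of_one_le_left (by positivity) hw) (by positivity)

end Dirichlet

theorem prod_abs_le_of_abs_apply_le {d : ℕ} (hd : 2 ≤ d) {v : Fin d → ℝ} {a t : ℝ} (ha : 0 ≤ a)
    (ht : 0 < t) {l : Fin d} (hv : ∀ i ≠ l, |v i| ≤ a / t) (hl : |v l| ≤ a * t ^ (d - 2)) :
    ∏ i, |v i| ≤ a ^ d / t := by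
  classical
  rw [← mul_prod_erase univ _ (mem_univ l)]
  calc |v l| * ∏ i ∈ univ.erase l, |v i| ≤ a * t ^ (d - 2) * (a / t) ^ (d - 1) := by
        have hcard : #(univ.erase l) = d - 1 := by simp [card_erase_of_mem]
        gcongr
        rw [← hcard, ← prod_const]
        exact prod_le_prod (fun i _ => abs_nonneg (v i)) fun i hi => hv i (ne_of_mem_erase hi)
    _ = a ^ d / t := by
        obtain ⟨p, rfl⟩ := Nat.exists_eq_add_of_le' hd
        rw [show p + 2 - 2 = p by omega, show p + 2 - 1 = p + 1 by omega, div_pow]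
        field_simp
        ring

theorem piProd_eq_zero_of_apply_eq_zero {d : ℕ} {x : Fin d → ℝ} {j : Fin d} (hj : x j = 0) :
    piProd d x = 0 := by
  have hd : (0 : ℝ) < 1 / d := one_div_pos.mpr (by exact_mod_cast j.pos)
  rw [piProd, prod_eq_zero (mem_univ j) (by rw [hj, abs_zero]), Real.zero_rpow hd.ne']

theorem piProd_le_of_prod_abs_le {d : ℕ} (hd : d ≠ 0) {v : Fin d → ℝ} {a t : ℝ} (ha : 0 ≤ a)
    (ht : 0 < t) (h : ∏ i, |v i| ≤ a ^ d / t) : piProd d v ≤ a * t ^ (-(1 / d : ℝ)) := by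
  calc piProd d v ≤ (a ^ d / t) ^ (1 / d : ℝ) :=
        Real.rpow_le_rpow (prod_nonneg fun i _ => abs_nonneg (v i)) h (by positivity)
    _ = a * t ^ (-(1 / d : ℝ)) := by
        rw [Real.div_rpow (by positivity) ht.le, one_div, Real.pow_rpow_inv_natCast ha hd,
          Real.rpow_neg ht.le, div_eq_mul_inv]

theorem piProd_le_of_abs_apply_le {d : ℕ} (hd : 3 ≤ d) {v : Fin d → ℝ} (hv : v ≠ 0) {a t : ℝ}
    (ha : 0 < a) (ht : 0 < t) {l : Fin d} (hvl : ∀ i ≠ l, |v i| ≤ a / t)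
    (hnorm : ‖v‖ ≤ a * t ^ (d - 2)) :
    piProd d v ≤ a ^ (1 + 1 / ((d : ℝ) * ((d : ℝ) - 2))) *
      ‖v‖ ^ (-(1 / ((d : ℝ) * ((d : ℝ) - 2)))) := by
  set γ : ℝ := 1 / ((d : ℝ) * ((d : ℝ) - 2))
  have hd2 : (2 : ℝ) < d := by exact_mod_cast hd
  have hγ : 0 ≤ γ := by positivity
  have hprod := prod_abs_le_of_abs_apply_le (by omega) ha.le ht hvl
    ((Real.norm_eq_abs (v l) ▸ norm_le_pi_norm v l).trans hnorm)
  have htγ : t ^ (-(1 / d : ℝ)) = (t ^ (d - 2)) ^ (-γ) := by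
    rw [← Real.rpow_natCast_mul ht.le, Nat.cast_sub (by omega)]
    have : (d : ℝ) - 2 ≠ 0 := by linarith
    congr 1
    push_cast
    simp only [γ]
    field_simp
  calc piProd d v ≤ a * t ^ (-(1 / d : ℝ)) := piProd_le_of_prod_abs_le (by omega) ha.le ht hprod
    _ = a * (t ^ (d - 2)) ^ (-γ) := by rw [htγ]
    _ ≤ a * (‖v‖ / a) ^ (-γ) := mul_le_mul_of_nonneg_left
        (Real.rpow_le_rpow_of_nonpos (div_pos (norm_pos_iff.mpr hv) ha)
          ((div_le_iff₀' ha).mpr hnorm) (neg_nonpos.mpr hγ)) ha.le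
    _ = a ^ (1 + γ) * ‖v‖ ^ (-γ) := by
        rw [Real.div_rpow (norm_nonneg v) ha.le, Real.rpow_add ha, Real.rpow_one,
          Real.rpow_neg ha.le]
        field_simp

theorem infinite_setOf_piProd_le {d : ℕ} {L : Submodule ℤ (Fin d → ℝ)} {c γ : ℝ} (hc : 0 ≤ c)
    (j : Fin d) (h : ∀ ε > 0, ∃ v ∈ L, v ≠ 0 ∧ |v j| ≤ ε ∧ piProd d v ≤ c * ‖v‖ ^ (-γ)) :
    {v | v ∈ L ∧ v ≠ 0 ∧ piProd d v ≤ c * ‖v‖ ^ (-γ)}.Infinite := by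
  by_cases hzero : ∃ w ∈ L, w ≠ 0 ∧ w j = 0
  · obtain ⟨w, hw, hw0, hwj⟩ := hzero
    refine Set.infinite_of_injective_forall_mem (f := fun n : ℕ => ((n : ℤ) + 1) • w)
      (fun m n hmn => by simpa using smul_left_injective ℤ hw0 hmn)
      fun n => ⟨L.smul_mem _ hw, smul_ne_zero (by omega) hw0, ?_⟩
    rw [piProd_eq_zero_of_apply_eq_zero (j := j) (by simp [hwj])]
    positivity
  · push Not at hzero
    intro hfin
    obtain ⟨v₁, hv₁, hv₁0, -, hv₁c⟩ := h 1 one_pos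
    obtain ⟨v, hv, hmin⟩ := Set.exists_min_image _ (fun v => |v j|) hfin ⟨v₁, hv₁, hv₁0, hv₁c⟩
    have hpos : 0 < |v j| := abs_pos.mpr (hzero v hv.1 hv.2.1)
    obtain ⟨w, hw, hw0, hwj, hwc⟩ := h (|v j| / 2) (by positivity)
    linarith [hmin w ⟨hw, hw0, hwc⟩]

theorem coe_le_omegaExp_of_infinite {d : ℕ} (B : Module.Basis (Fin d) ℝ (Fin d → ℝ)) {c γ : ℝ}
    (hc : 0 ≤ c)
    (hS : {v | v ∈ span ℤ (Set.range B) ∧ v ≠ 0 ∧ piProd d v ≤ c * ‖v‖ ^ (-γ)}.Infinite) :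
    (γ : EReal) ≤ omegaExp (span ℤ (Set.range B) : Set (Fin d → ℝ)) := by
  refine le_of_forall_lt_imp_le_of_dense fun e he => ?_
  obtain ⟨γ', he', hγ'⟩ := EReal.exists_between_coe_real he
  have hδ : 0 < γ - γ' := sub_pos.mpr (EReal.coe_lt_coe_iff.mp hγ')
  refine he'.le.trans (le_sSup ⟨γ', rfl, ?_⟩)
  set R := c ^ (γ - γ')⁻¹
  have hfin := ZSpan.setFinite_inter B (Metric.isBounded_closedBall (x := 0) (r := R))
  refine (hS.sdiff hfin).mono ?_
  rintro x ⟨⟨hx, hx0, hxc⟩, hxR⟩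
  have hRx : R < ‖x‖ := not_le.mp fun h => hxR ⟨mem_closedBall_zero_iff.mpr h, hx⟩
  have hcx : c ≤ ‖x‖ ^ (γ - γ') := by
    rw [← Real.rpow_inv_rpow hc hδ.ne']
    exact Real.rpow_le_rpow (by positivity) hRx.le hδ.le
  refine ⟨hx, hx0, ?_⟩
  calc piProd d x ≤ c * ‖x‖ ^ (-γ) := hxc
    _ ≤ ‖x‖ ^ (γ - γ') * ‖x‖ ^ (-γ) := by gcongr
    _ = ‖x‖ ^ (-γ') := by rw [← Real.rpow_add (norm_pos_iff.mpr hx0)]; ring_nf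

/-- Case II of the transference theorem: if d ≥ 3 and the dual lattice Λ*
contains a nonzero point whose last coordinate vanishes, then there is c > 0 such that
Π(v) ≤ c|v|^{-1/(d(d-2))} for infinitely many nonzero v ∈ Λ; hence ω(Λ) ≥ 1/(d(d-2)). -/
theorem statement12 (d : ℕ) (hd : 3 ≤ d) (L : Set (Fin d → ℝ)) (hL : IsFullLattice L)
    (hu : ∃ u ∈ dualLattice L, u ≠ 0 ∧ u ⟨d - 1, by omega⟩ = 0) :
    (∃ c : ℝ, 0 < c ∧
      {v | v ∈ L ∧ v ≠ 0 ∧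
        piProd d v ≤ c * ‖v‖ ^ (-(1 / ((d : ℝ) * ((d : ℝ) - 2))))}.Infinite) ∧
    ((1 / ((d : ℝ) * ((d : ℝ) - 2)) : ℝ) : EReal) ≤ omegaExp L := by
  obtain ⟨B, rfl⟩ := hL.exists_basis_eq_span
  obtain ⟨u, hu, hu0, hul⟩ := hu
  obtain ⟨k, hk⟩ := Function.ne_iff.mp hu0
  have hkl : k ≠ ⟨d - 1, by omega⟩ := fun h => hk (h ▸ hul)
  obtain ⟨a, ha, hsmall⟩ := exists_forall_exists_mem_span_abs_apply_le B hd hu hk hul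
  have hS := infinite_setOf_piProd_le (L := span ℤ (Set.range B))
    (c := a ^ (1 + 1 / ((d : ℝ) * ((d : ℝ) - 2)))) (by positivity) k fun ε hε => by
      obtain ⟨t, ht⟩ := exists_nat_ge (a / ε)
      have ht0 : (0 : ℝ) < t := (div_pos ha hε).trans_le ht
      obtain ⟨v, hv, hv0, hvl, hvn⟩ := hsmall t (by exact_mod_cast ht0)
      refine ⟨v, hv, hv0, (hvl k hkl).trans ?_, piProd_le_of_abs_apply_le hd hv0 ha ht0 hvl hvn⟩
      rwa [div_le_iff₀ ht0, mul_comm, ← div_le_iff₀ hε]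
  exact ⟨⟨_, by positivity, hS⟩, coe_le_omegaExp_of_infinite B (by positivity) hS⟩
end

section
/- Let d ≥ 3 and let Λ be a full-rank lattice in ℝ^d with det Λ = 1. Assuming the German–Evdokimov transference theorem (with c = d^{1/(2(d-2))}: if the pseudo-compound P* of a box P contains a nonzero point of Λ*, then cP contains a nonzero point of Λ), one has ω(Λ) ≥ ω(Λ*) / ((d-1)^2 + d(d-2) ω(Λ*)), where this is interpreted as ω(Λ) ≥ 1/(d(d-2)) when ω(Λ*) = ∞. -/
open scoped BigOperators

/-!
Let `y ∈ Λ*` with `Π(y) ≤ |y|^{-γ}` and `ε = |y|^{-(d-1+dγ)}`. The box with half-sides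
`m_i = max(|y_i|, ε)` contains `y`, has `∏ m_i ≤ |y|^{-dγ}`, and is the pseudo-compound of the box
with half-sides `V / m_i`, `V = (∏ m_i)^{1/(d-1)}`. Transference therefore gives `x ∈ Λ \ {0}` with
`Π(x) ≪ |y|^{-γ/(d-1)}`, `|x| ≪ |y|^{Q/(d-1)}` where `Q = (d-1)² + d(d-2)γ`, and some
`|x_i| ≪ 1/|y|`; so `Π(x) ≤ |x|^{-δ}` once `δQ < γ` and `|y|` is large. The small coordinate makes
infinitely many of these `x` distinct, unless `Λ` meets a coordinate hyperplane, in which case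
`ω(Λ) = ∞` trivially. Negative exponents come from Minkowski's theorem.
-/

open Set Submodule Module Metric MeasureTheory

variable {d : ℕ}

def solutionSet (L : Set (Fin d → ℝ)) (γ : ℝ) : Set (Fin d → ℝ) :=
  {x | x ∈ L ∧ x ≠ 0 ∧ piProd d x ≤ ‖x‖ ^ (-γ)}

/-- The German–Evdokimov property with constant `c`; `(∏ j, η j) / η i` are the half-sides of the
pseudo-compound of the box with half-sides `η`. -/
def HasTransference (L : Set (Fin d → ℝ)) (c : ℝ) : Prop :=
  ∀ η : Fin d → ℝ, (∀ i, 0 < η i) →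
    (∃ y ∈ dualLattice L, y ≠ 0 ∧ ∀ i, |y i| ≤ (∏ j, η j) / η i) →
    ∃ x ∈ L, x ≠ 0 ∧ ∀ i, |x i| ≤ c * η i

theorem Set.Infinite.exists_norm_gt {E : Type*} [NormedAddCommGroup E] {S : Set E} {R : ℝ}
    (hS : S.Infinite) (hfin : (closedBall 0 R ∩ S).Finite) : ∃ x ∈ S, R < ‖x‖ := by
  obtain ⟨x, hxS, hx⟩ := (hS.sdiff hfin).nonempty
  exact ⟨x, hxS, not_le.1 fun h => hx ⟨mem_closedBall_zero_iff.2 h, hxS⟩⟩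

theorem Set.infinite_of_forall_exists_abs_apply_lt {ι : Type*} [Finite ι] {A : Set (ι → ℝ)}
    (hA : ∀ x ∈ A, ∀ i, x i ≠ 0) (h : ∀ R > 0, ∃ x ∈ A, ∃ i, |x i| < R) : A.Infinite := by
  intro hfin
  set T := image2 (fun x i => |x i|) A univ
  have h0 : (0 : ℝ) ∈ closure T := Metric.mem_closure_iff.2 fun R hR => by
    obtain ⟨x, hx, i, hi⟩ := h R hR
    exact ⟨|x i|, mem_image2_of_mem hx (mem_univ i), by simpa using hi⟩
  rw [(hfin.image2 _ finite_univ).isClosed.closure_eq] at h0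
  obtain ⟨x, hx, i, -, hxi⟩ := h0
  exact hA x hx i (abs_eq_zero.1 hxi)

theorem exists_norm_le_abs_apply {ι : Type*} [Fintype ι] [Nonempty ι] (y : ι → ℝ) :
    ∃ i, ‖y‖ ≤ |y i| := by
  obtain ⟨i, -, hi⟩ := Finset.exists_mem_eq_sup Finset.univ Finset.univ_nonempty fun i => ‖y i‖₊
  exact ⟨i, by rw [Pi.norm_def, hi, coe_nnnorm, Real.norm_eq_abs]⟩

theorem prod_max_abs_le {y : Fin d → ℝ} {ε : ℝ} (hε : 0 ≤ ε) (hεy : ε ≤ ‖y‖) :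
    ∏ i, max |y i| ε ≤ max (∏ i, |y i|) (ε * ‖y‖ ^ (d - 1)) := by
  by_cases h : ∀ i, ε ≤ |y i|
  · exact le_max_of_le_left (Finset.prod_congr rfl fun i _ => max_eq_left (h i)).le
  simp only [not_forall, not_le] at h
  obtain ⟨i₀, hi₀⟩ := h
  refine le_max_of_le_right ?_
  rw [← Finset.mul_prod_erase _ _ (Finset.mem_univ i₀), max_eq_right hi₀.le]
  gcongr
  calc ∏ i ∈ Finset.univ.erase i₀, max |y i| ε ≤ ∏ i ∈ Finset.univ.erase i₀, ‖y‖ :=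
        Finset.prod_le_prod (fun i _ => hε.trans (le_max_right _ _))
          fun i _ => max_le (norm_le_pi_norm y i) hεy
    _ = ‖y‖ ^ (d - 1) := by simp [Finset.card_erase_of_mem]

theorem prod_rpow_div (hd : 2 ≤ d) {m : Fin d → ℝ} (hm : ∀ i, 0 < m i) :
    ∏ i, (∏ j, m j) ^ ((1 : ℝ) / (d - 1)) / m i = (∏ j, m j) ^ ((1 : ℝ) / (d - 1)) := by
  set P := ∏ j, m j
  have hP : 0 < P := Finset.prod_pos fun i _ => hm i
  have hV : ((P ^ ((1 : ℝ) / (d - 1))) ^ (d - 1)) = P := by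
    rw [one_div, ← Nat.cast_pred (by omega), Real.rpow_inv_natCast_pow hP.le (by omega)]
  rw [Finset.prod_div_distrib, Finset.prod_const, Finset.card_univ, Fintype.card_fin,
    ← pow_sub_one_mul (by omega : d ≠ 0), hV, mul_div_cancel_left₀ _ hP.ne']

theorem prod_update_const {n : ℕ} (i : Fin (n + 1)) (a t : ℝ) :
    ∏ j, Function.update (fun _ => t) i a j = a * t ^ n := by
  simp [Finset.prod_update_of_mem (Finset.mem_univ i), Finset.prod_const, Finset.card_sdiff]

theorem exists_lt_mul_add_lt_of_lt_div {a b γ δ : ℝ} (ha : 0 < a) (hb : 0 ≤ b) (hγ : 0 ≤ γ)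
    (hδ : 0 ≤ δ) (h : δ < γ / (a + b * γ)) : ∃ γ' < γ, 0 ≤ γ' ∧ δ * (a + b * γ') < γ' := by
  have hδγ := (lt_div_iff₀ (by positivity : 0 < a + b * γ)).1 h
  refine ⟨(γ + δ * (a + b * γ)) / 2, by linarith, by positivity, ?_⟩
  nlinarith [mul_pos (sub_pos.2 hδγ) (by positivity : 0 < 1 + δ * b)]

theorem exists_mul_add_lt {a b δ : ℝ} (ha : 0 ≤ a) (hδ : 0 ≤ δ) (h : δ * b < 1) :
    ∃ γ, 0 ≤ γ ∧ δ * (a + b * γ) < γ := by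
  have hδb : 0 < 1 - δ * b := by linarith
  refine ⟨δ * a / (1 - δ * b) + 1, by positivity, ?_⟩
  have : (δ * a / (1 - δ * b) + 1) * (1 - δ * b) = δ * a + (1 - δ * b) := by
    rw [div_add_one hδb.ne', div_mul_cancel₀ _ hδb.ne']
  nlinarith

theorem setOf_sum_intCast_smul_eq_span {ι E : Type*} [Fintype ι] [AddCommGroup E] [Module ℝ E]
    (B : ι → E) : {x | ∃ z : ι → ℤ, x = ∑ i, (z i : ℝ) • B i} = (span ℤ (range B) : Set E) := by
  ext x
  simp only [mem_ofPred_eq, SetLike.mem_coe, mem_span_range_iff_exists_fun, Int.cast_smul_eq_zsmul,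
    eq_comm]

theorem exists_ne_zero_mem_span_abs_lt {ι : Type*} [Fintype ι] [DecidableEq ι]
    (B : Basis ι ℝ (ι → ℝ)) {r : ι → ℝ} (hr : ∀ i, 0 < r i) (h : |(Matrix.of B).det| < ∏ i, r i) :
    ∃ x ∈ span ℤ (range B), x ≠ 0 ∧ ∀ i, |x i| < r i := by
  set box : Set (ι → ℝ) := univ.pi fun i => Ioo (-r i) (r i)
  have h_symm : ∀ x ∈ box, -x ∈ box := fun x hx i hi => by
    simpa [and_comm, neg_lt] using hx i hi
  have hvol : volume (ZSpan.fundamentalDomain B) * 2 ^ finrank ℝ (ι → ℝ) < volume box := by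
    rw [ZSpan.volume_fundamentalDomain, volume_pi_pi, finrank_fintype_fun_eq_card]
    simp_rw [Real.volume_Ioo, sub_neg_eq_add, ← two_mul]
    rw [← ENNReal.ofReal_prod_of_nonneg fun i _ => by linarith [hr i], Finset.prod_mul_distrib,
      Finset.prod_const, Finset.card_univ, ← ENNReal.ofReal_ofNat, ← ENNReal.ofReal_pow zero_le_two,
      ← ENNReal.ofReal_mul (abs_nonneg _), ENNReal.ofReal_lt_ofReal_iff_of_nonneg (by positivity),
      mul_comm]
    exact mul_lt_mul_of_pos_left h (by positivity)
  have : Countable (span ℤ (range B)).toAddSubgroup :=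
    inferInstanceAs (Countable (span ℤ (range B)))
  obtain ⟨⟨x, hxΛ⟩, hx0, hx⟩ := exists_ne_zero_mem_lattice_of_measure_mul_two_pow_lt_measure
    (ZSpan.isAddFundamentalDomain' B volume) h_symm (convex_pi fun i _ => convex_Ioo _ _) hvol
  exact ⟨x, hxΛ, by simpa using hx0, fun i => abs_lt.2 (hx i (mem_univ i))⟩

theorem finite_closedBall_inter_dualLattice (B : Basis (Fin d) ℝ (Fin d → ℝ)) (R : ℝ) :
    (closedBall 0 R ∩ dualLattice (span ℤ (range B) : Set (Fin d → ℝ))).Finite := by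
  set f := (Matrix.of B).mulVecLin
  have hf : Function.Injective f := by
    have : Invertible ((Pi.basisFun ℝ (Fin d)).toMatrix B) := Basis.invertibleToMatrix _ _
    have hB : Matrix.of B = ((Pi.basisFun ℝ (Fin d)).toMatrix B).transpose := by
      ext i j
      simp [Basis.toMatrix_apply]
    refine Matrix.mulVec_injective_iff_isUnit.2 ?_
    rw [hB, Matrix.isUnit_transpose]
    exact isUnit_of_invertible _
  have hfin := ZSpan.setFinite_inter (Pi.basisFun ℝ (Fin d))
    (f.toContinuousLinearMap.lipschitz.isBounded_image (isBounded_closedBall (x := 0) (r := R)))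
  refine (hfin.preimage hf.injOn).subset fun y ⟨hyR, hy⟩ => ⟨mem_image_of_mem f hyR, ?_⟩
  refine ((Pi.basisFun ℝ (Fin d)).mem_span_iff_repr_mem ℤ (f y)).2 fun i => ?_
  obtain ⟨n, hn⟩ := hy (B i) (subset_span (mem_range_self i))
  exact ⟨n, by simp [f, Matrix.mulVec, dotProduct, ← hn, mul_comm]⟩

section SolutionSet

variable {L : Set (Fin d → ℝ)}

theorem coe_le_omegaExp_of_forall_lt {r : ℝ} (h : ∀ δ < r, (solutionSet L δ).Infinite) :
    (r : EReal) ≤ omegaExp L := by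
  refine le_of_forall_lt_imp_le_of_dense fun a ha => ?_
  induction a using EReal.rec with
  | bot => exact bot_le
  | coe δ => exact le_sSup ⟨δ, rfl, h δ (EReal.coe_lt_coe_iff.1 ha)⟩
  | top => exact absurd ha (not_lt.2 le_top)

theorem solutionSet_infinite_of_le (hL : ∀ R, (closedBall 0 R ∩ L).Finite) {γ₁ γ₂ : ℝ}
    (h : γ₁ ≤ γ₂) (h₂ : (solutionSet L γ₂).Infinite) : (solutionSet L γ₁).Infinite := by
  refine (h₂.sdiff (hL 1)).mono ?_
  rintro x ⟨⟨hxL, hx0, hx⟩, hx1⟩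
  have : 1 ≤ ‖x‖ := le_of_lt (not_le.1 fun h => hx1 ⟨mem_closedBall_zero_iff.2 h, hxL⟩)
  exact ⟨hxL, hx0, hx.trans (Real.rpow_le_rpow_of_exponent_le this (neg_le_neg h))⟩

theorem solutionSet_infinite_of_coe_lt_omegaExp (hL : ∀ R, (closedBall 0 R ∩ L).Finite)
    {γ : ℝ} (h : (γ : EReal) < omegaExp L) : (solutionSet L γ).Infinite := by
  obtain ⟨-, ⟨γ₀, rfl, hinf⟩, hlt⟩ := lt_sSup_iff.1 h
  exact solutionSet_infinite_of_le hL (EReal.coe_lt_coe_iff.1 hlt).le hinf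

end SolutionSet

theorem solutionSet_infinite_of_apply_eq_zero {Λ : Submodule ℤ (Fin d → ℝ)} {x₀ : Fin d → ℝ}
    (hx₀ : x₀ ∈ Λ) (hne : x₀ ≠ 0) {i : Fin d} (hi : x₀ i = 0) (γ : ℝ) :
    (solutionSet (Λ : Set (Fin d → ℝ)) γ).Infinite := by
  have hinj : Function.Injective fun n : ℕ => ((n : ℤ) + 1) • x₀ :=
    (smul_left_injective ℤ hne).comp fun a b h => by simpa using h
  refine (infinite_range_of_injective hinj).mono ?_
  rintro - ⟨n, rfl⟩
  have hd : (1 : ℝ) / d ≠ 0 := by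
    have : 0 < d := i.pos
    positivity
  refine ⟨Λ.smul_mem _ hx₀, smul_ne_zero (by omega) hne, ?_⟩
  rw [piProd, Finset.prod_eq_zero (Finset.mem_univ i) (by simp [hi]), Real.zero_rpow hd]
  positivity

theorem piProd_le_of_abs_le {c : ℝ} (hd : d ≠ 0) (hc : 0 ≤ c) {x η : Fin d → ℝ}
    (hη : ∀ i, 0 ≤ η i) (h : ∀ i, |x i| ≤ c * η i) :
    piProd d x ≤ c * (∏ i, η i) ^ ((1 : ℝ) / d) := by
  have hη' : 0 ≤ ∏ i, η i := Finset.prod_nonneg fun i _ => hη i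
  calc piProd d x ≤ (∏ i, c * η i) ^ ((1 : ℝ) / d) :=
        Real.rpow_le_rpow (Finset.prod_nonneg fun i _ => abs_nonneg _)
          (Finset.prod_le_prod (fun i _ => abs_nonneg _) fun i _ => h i) (by positivity)
    _ = c * (∏ i, η i) ^ ((1 : ℝ) / d) := by
        rw [Finset.prod_mul_distrib, Finset.prod_const, Finset.card_univ, Fintype.card_fin,
          Real.mul_rpow (by positivity) hη', ← Real.rpow_natCast, ← Real.rpow_mul hc,
          mul_one_div_cancel (by simpa using hd), Real.rpow_one]

theorem solutionSet_span_infinite_of_neg (hd : 2 ≤ d) (B : Basis (Fin d) ℝ (Fin d → ℝ))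
    (hL0 : ∀ x ∈ span ℤ (range B), x ≠ 0 → ∀ i, x i ≠ 0) {δ : ℝ} (hδ : δ < 0) :
    (solutionSet (span ℤ (range B) : Set (Fin d → ℝ)) δ).Infinite := by
  obtain ⟨n, rfl⟩ : ∃ n, d = n + 1 := ⟨d - 1, by omega⟩
  set K := |(Matrix.of B).det| + 1
  have hK : 1 ≤ K := by simp [K]
  set A := {x | x ∈ span ℤ (range B) ∧ x ≠ 0 ∧ ∏ i, |x i| ≤ K}
  have hA : A.Infinite := by
    refine infinite_of_forall_exists_abs_apply_lt (fun x hx => hL0 x hx.1 hx.2.1) fun R hR => ?_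
    set t := K / R + 1
    have ht : K / R < t ^ n := by
      have : K / R < t := by linarith
      exact this.trans_le (le_self_pow₀ (by simp [t]; positivity) (by omega))
    set r : Fin (n + 1) → ℝ := Function.update (fun _ => t) 0 (K / t ^ n)
    have hr : ∀ i, 0 < r i := fun i => by
      unfold r; rcases eq_or_ne i 0 with rfl | hi <;> simp [*] <;> positivity
    have hprod : ∏ i, r i = K := by
      rw [prod_update_const, div_mul_cancel₀ _ (by positivity)]
    obtain ⟨x, hxΛ, hx0, hxr⟩ := exists_ne_zero_mem_span_abs_lt B hr (by linarith)
    refine ⟨x, ⟨hxΛ, hx0, ?_⟩, 0, (hxr 0).trans_le ?_⟩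
    · exact hprod ▸ Finset.prod_le_prod (fun i _ => abs_nonneg _) fun i _ => (hxr i).le
    · simpa [r, div_le_iff₀ (by positivity : (0 : ℝ) < t ^ n), mul_comm R, ← div_le_iff₀ hR]
        using ht.le
  set R₀ := K ^ (-δ)⁻¹
  refine (hA.sdiff (ZSpan.setFinite_inter B (isBounded_closedBall (x := 0) (r := R₀)))).mono ?_
  rintro x ⟨⟨hxΛ, hx0, hxK⟩, hxR⟩
  have hR₀ : R₀ < ‖x‖ := not_le.1 fun h => hxR ⟨mem_closedBall_zero_iff.2 h, hxΛ⟩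
  refine ⟨hxΛ, hx0, ?_⟩
  calc piProd (n + 1) x ≤ K ^ ((1 : ℝ) / (n + 1 : ℕ)) :=
        Real.rpow_le_rpow (Finset.prod_nonneg fun i _ => abs_nonneg _) hxK (by positivity)
    _ ≤ K ^ (1 : ℝ) := Real.rpow_le_rpow_of_exponent_le hK
        (div_le_one_of_le₀ (by simp) (by positivity))
    _ = R₀ ^ (-δ) := by rw [← Real.rpow_mul (by positivity), inv_mul_cancel₀ (by linarith)]
    _ ≤ ‖x‖ ^ (-δ) := Real.rpow_le_rpow (by positivity) hR₀.le (by linarith)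

theorem prod_abs_eq_piProd_pow (hd : d ≠ 0) (x : Fin d → ℝ) : ∏ i, |x i| = piProd d x ^ d := by
  rw [piProd, ← Real.rpow_natCast, ← Real.rpow_mul (Finset.prod_nonneg fun i _ => abs_nonneg _),
    one_div_mul_cancel (by simpa using hd), Real.rpow_one]

/-- `ε = ‖y‖ ^ (-(d - 1 + dγ))` is chosen so that `ε ‖y‖ ^ (d - 1)` matches the bound
`‖y‖ ^ (-dγ)` on `∏ i, |y i|`. -/
theorem prod_max_abs_rpow_le (hd : 2 ≤ d) {γ : ℝ} (hγ : 0 ≤ γ) {y : Fin d → ℝ}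
    (hy : piProd d y ≤ ‖y‖ ^ (-γ)) (hY : 1 ≤ ‖y‖) :
    ∏ i, max |y i| (‖y‖ ^ (-((d : ℝ) - 1 + d * γ))) ≤ ‖y‖ ^ (-(d * γ)) := by
  have hd' : (2 : ℝ) ≤ d := by exact_mod_cast hd
  have hY0 : 0 < ‖y‖ := by linarith
  refine (prod_max_abs_le (by positivity)
    ((Real.rpow_le_one_of_one_le_of_nonpos hY (by nlinarith)).trans hY)).trans
    (max_le ?_ (le_of_eq ?_))
  · calc ∏ i, |y i| = piProd d y ^ d := prod_abs_eq_piProd_pow (by omega) y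
      _ ≤ (‖y‖ ^ (-γ)) ^ d := pow_le_pow_left₀ (Real.rpow_nonneg (Finset.prod_nonneg
          fun i _ => abs_nonneg _) _) hy d
      _ = ‖y‖ ^ (-(d * γ)) := by rw [← Real.rpow_mul_natCast hY0.le]; ring_nf
  · rw [← Real.rpow_natCast, Nat.cast_pred (by omega), ← Real.rpow_add hY0]
    ring_nf

namespace HasTransference

variable {L : Set (Fin d → ℝ)} {c : ℝ}

theorem exists_abs_le (hT : HasTransference L c) (hd : 2 ≤ d) {y : Fin d → ℝ}
    (hy : y ∈ dualLattice L) (hy0 : y ≠ 0) {m : Fin d → ℝ} (hm : ∀ i, 0 < m i)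
    (hym : ∀ i, |y i| ≤ m i) :
    ∃ x ∈ L, x ≠ 0 ∧ ∀ i, |x i| ≤ c * ((∏ j, m j) ^ ((1 : ℝ) / (d - 1)) / m i) := by
  have hV : 0 < (∏ j, m j) ^ ((1 : ℝ) / (d - 1)) :=
    Real.rpow_pos_of_pos (Finset.prod_pos fun i _ => hm i) _
  refine hT _ (fun i => div_pos hV (hm i)) ⟨y, hy, hy0, fun i => ?_⟩
  rw [prod_rpow_div hd hm, div_div_cancel₀ hV.ne']
  exact hym i

theorem exists_of_mem_solutionSet_dualLattice (hT : HasTransference L c) (hd : 2 ≤ d)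
    (hc : 0 ≤ c) {γ : ℝ} (hγ : 0 ≤ γ) {y : Fin d → ℝ} (hy : y ∈ solutionSet (dualLattice L) γ)
    (hY : 1 ≤ ‖y‖) :
    ∃ x ∈ L, x ≠ 0 ∧ piProd d x ≤ c * ‖y‖ ^ (-γ / (d - 1)) ∧
      ‖x‖ ≤ c * ‖y‖ ^ ((((d : ℝ) - 1) ^ 2 + d * (d - 2) * γ) / (d - 1)) ∧
      ∃ i, |x i| ≤ c / ‖y‖ := by
  obtain ⟨hyL, hy0, hyProd⟩ := hy
  have hd' : (2 : ℝ) ≤ d := by exact_mod_cast hd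
  have hd1 : (d : ℝ) - 1 ≠ 0 := by linarith
  set Y := ‖y‖
  have hY0 : 0 < Y := by linarith
  set ε := Y ^ (-((d : ℝ) - 1 + d * γ))
  have hε0 : 0 < ε := by positivity
  set m := fun i => max |y i| ε
  have hm0 : ∀ i, 0 < m i := fun i => hε0.trans_le (le_max_right _ _)
  set V := (∏ i, m i) ^ ((1 : ℝ) / (d - 1))
  have hV0 : 0 < V := Real.rpow_pos_of_pos (Finset.prod_pos fun i _ => hm0 i) _
  have hV : V ≤ Y ^ (-(d * γ) / (d - 1)) := by
    calc V ≤ (Y ^ (-(d * γ))) ^ ((1 : ℝ) / (d - 1)) :=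
          Real.rpow_le_rpow (Finset.prod_nonneg fun i _ => (hm0 i).le)
            (prod_max_abs_rpow_le hd hγ hyProd hY) (div_nonneg zero_le_one (by linarith))
      _ = Y ^ (-(d * γ) / (d - 1)) := by rw [← Real.rpow_mul hY0.le, mul_one_div]
  obtain ⟨x, hxL, hx0, hx⟩ := hT.exists_abs_le hd hyL hy0 hm0 fun i => le_max_left _ _
  refine ⟨x, hxL, hx0, ?_, ?_, ?_⟩
  · calc piProd d x ≤ c * (∏ i, V / m i) ^ ((1 : ℝ) / d) :=
          piProd_le_of_abs_le (by omega) hc (fun i => (div_pos hV0 (hm0 i)).le) hx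
      _ ≤ c * (Y ^ (-(d * γ) / (d - 1))) ^ ((1 : ℝ) / d) := by
          rw [prod_rpow_div hd hm0]
          gcongr
      _ = c * Y ^ (-γ / (d - 1)) := by
          rw [← Real.rpow_mul hY0.le]
          congr 2
          field_simp
  · refine (pi_norm_le_iff_of_nonneg (by positivity)).2 fun i => ?_
    calc ‖x i‖ ≤ c * (V / ε) := by
          rw [Real.norm_eq_abs]
          exact (hx i).trans (by gcongr; exact le_max_right _ _)
      _ ≤ c * (Y ^ (-(d * γ) / (d - 1)) / ε) := by gcongr
      _ = c * Y ^ ((((d : ℝ) - 1) ^ 2 + d * (d - 2) * γ) / (d - 1)) := by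
          rw [← Real.rpow_sub hY0]
          congr 2
          field_simp
          ring
  · have : Nonempty (Fin d) := ⟨⟨0, by omega⟩⟩
    obtain ⟨i, hi⟩ := exists_norm_le_abs_apply y
    refine ⟨i, (hx i).trans ?_⟩
    calc c * (V / m i) ≤ c * (1 / Y) := by
          gcongr
          · exact hV.trans (Real.rpow_le_one_of_one_le_of_nonpos hY
              (div_nonpos_of_nonpos_of_nonneg (by nlinarith) (by linarith)))
          · exact hi.trans (le_max_left _ _)
      _ = c / Y := mul_one_div c Y

theorem solutionSet_infinite (hT : HasTransference L c) (hd : 2 ≤ d) (hc : 0 < c)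
    (hdual : ∀ R, (closedBall 0 R ∩ dualLattice L).Finite) (hL0 : ∀ x ∈ L, x ≠ 0 → ∀ i, x i ≠ 0)
    {γ δ : ℝ} (hγ : 0 ≤ γ) (hδ : 0 ≤ δ) (hδγ : δ * (((d : ℝ) - 1) ^ 2 + d * (d - 2) * γ) < γ)
    (hinf : (solutionSet (dualLattice L) γ).Infinite) : (solutionSet L δ).Infinite := by
  set Q := ((d : ℝ) - 1) ^ 2 + d * (d - 2) * γ
  have hd' : (2 : ℝ) ≤ d := by exact_mod_cast hd
  have hd1 : (d : ℝ) - 1 ≠ 0 := by linarith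
  set E := (γ - δ * Q) / (d - 1)
  have hE : 0 < E := div_pos (by linarith) (by linarith)
  refine infinite_of_forall_exists_abs_apply_lt (fun x hx => hL0 x hx.1 hx.2.1) fun R hR => ?_
  obtain ⟨y, hy, hYbig⟩ := hinf.exists_norm_gt (R := max (max 1 (c / R)) (c ^ ((1 + δ) / E)))
    ((hdual _).subset (inter_subset_inter_right _ fun y hy => hy.1))
  set Y := ‖y‖
  have hY1 : 1 ≤ Y := ((le_max_left _ _).trans (le_max_left _ _)).trans hYbig.le
  have hY0 : 0 < Y := by linarith
  have hYR : c / R < Y := ((le_max_right _ _).trans (le_max_left _ _)).trans_lt hYbig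
  have hYE : c ^ (1 + δ) ≤ Y ^ E := by
    calc c ^ (1 + δ) = (c ^ ((1 + δ) / E)) ^ E := by
          rw [← Real.rpow_mul hc.le, div_mul_cancel₀ _ hE.ne']
      _ ≤ Y ^ E := Real.rpow_le_rpow (by positivity) ((le_max_right _ _).trans hYbig.le) hE.le
  obtain ⟨x, hxL, hx0, hxProd, hxnorm, i, hi⟩ :=
    hT.exists_of_mem_solutionSet_dualLattice hd hc.le hγ hy hY1
  refine ⟨x, ⟨hxL, hx0, ?_⟩, i, hi.trans_lt ((div_lt_comm₀ hY0 hR).2 hYR)⟩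
  calc piProd d x ≤ c * Y ^ (-γ / (d - 1)) := hxProd
    _ = c ^ (1 + δ) * (c ^ (-δ) * Y ^ (-γ / (d - 1))) := by
        rw [← mul_assoc, ← Real.rpow_add hc, add_neg_cancel_right, Real.rpow_one]
    _ ≤ Y ^ E * (c ^ (-δ) * Y ^ (-γ / (d - 1))) := by gcongr
    _ = (c * Y ^ (Q / (d - 1))) ^ (-δ) := by
        rw [Real.mul_rpow hc.le (by positivity), ← Real.rpow_mul hY0.le, mul_left_comm,
          ← Real.rpow_add hY0]
        congr 2
        simp only [E]
        field_simp
        ring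
    _ ≤ ‖x‖ ^ (-δ) := Real.rpow_le_rpow_of_nonpos (norm_pos_iff.2 hx0) hxnorm (by linarith)

end HasTransference

theorem coe_le_omegaExp_span {c : ℝ} (hd : 2 ≤ d) (B : Basis (Fin d) ℝ (Fin d → ℝ))
    (hT : HasTransference (span ℤ (range B) : Set (Fin d → ℝ)) c) (hc : 0 < c) {r : ℝ}
    (h : ∀ δ, 0 ≤ δ → δ < r → ∃ γ, 0 ≤ γ ∧ δ * (((d : ℝ) - 1) ^ 2 + d * (d - 2) * γ) < γ ∧
      (γ : EReal) < omegaExp (dualLattice (span ℤ (range B) : Set (Fin d → ℝ)))) :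
    (r : EReal) ≤ omegaExp (span ℤ (range B) : Set (Fin d → ℝ)) := by
  refine coe_le_omegaExp_of_forall_lt fun δ hδr => ?_
  by_cases hL0 : ∀ x ∈ span ℤ (range B), x ≠ 0 → ∀ i, x i ≠ 0
  · rcases lt_or_ge δ 0 with hδ | hδ
    · exact solutionSet_span_infinite_of_neg hd B hL0 hδ
    obtain ⟨γ, hγ, hδγ, hγω⟩ := h δ hδ hδr
    have hdual := finite_closedBall_inter_dualLattice B
    exact hT.solutionSet_infinite hd hc hdual hL0 hγ hδ hδγ
      (solutionSet_infinite_of_coe_lt_omegaExp hdual hγω)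
  · simp only [not_forall, not_not, exists_prop] at hL0
    obtain ⟨x, hx, hx0, i, hi⟩ := hL0
    exact solutionSet_infinite_of_apply_eq_zero hx hx0 hi δ

theorem statement13_general (d : ℕ) (hd : 3 ≤ d) (B : Module.Basis (Fin d) ℝ (Fin d → ℝ))
    (L : Set (Fin d → ℝ))
    (hL : L = {x | ∃ z : Fin d → ℤ, x = ∑ i, (z i : ℝ) • B i})
    (hGE : ∀ η : Fin d → ℝ, (∀ i, 0 < η i) →
      (∃ y ∈ dualLattice L, y ≠ 0 ∧ ∀ i, |y i| ≤ (∏ j, η j) / η i) →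
      ∃ x ∈ L, x ≠ 0 ∧ ∀ i, |x i| ≤ (d : ℝ) ^ ((1 : ℝ) / (2 * ((d : ℝ) - 2))) * η i) :
    (∀ γ : ℝ, 0 ≤ γ → ((γ : ℝ) : EReal) ≤ omegaExp (dualLattice L) →
      (((γ / (((d : ℝ) - 1) ^ 2 + (d : ℝ) * ((d : ℝ) - 2) * γ)) : ℝ) : EReal) ≤
        omegaExp L) ∧
    (omegaExp (dualLattice L) = ⊤ →
      (((1 / ((d : ℝ) * ((d : ℝ) - 2))) : ℝ) : EReal) ≤ omegaExp L) := by
  rw [setOf_sum_intCast_smul_eq_span] at hL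
  subst hL
  have hd' : (3 : ℝ) ≤ d := by exact_mod_cast hd
  have ha : 0 < ((d : ℝ) - 1) ^ 2 := by nlinarith
  have hb : 0 < (d : ℝ) * (d - 2) := by nlinarith
  have hc : 0 < (d : ℝ) ^ ((1 : ℝ) / (2 * ((d : ℝ) - 2))) := by positivity
  refine ⟨fun γ hγ hγω => coe_le_omegaExp_span (by omega) B hGE hc fun δ hδ hδr => ?_,
    fun htop => coe_le_omegaExp_span (by omega) B hGE hc fun δ hδ hδr => ?_⟩
  · obtain ⟨γ', hγ'γ, hγ', hδγ'⟩ := exists_lt_mul_add_lt_of_lt_div ha hb.le hγ hδ hδr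
    exact ⟨γ', hγ', hδγ', (EReal.coe_lt_coe_iff.2 hγ'γ).trans_le hγω⟩
  · obtain ⟨γ', hγ', hδγ'⟩ := exists_mul_add_lt ha.le hδ ((lt_div_iff₀ hb).1 hδr)
    exact ⟨γ', hγ', hδγ', htop ▸ EReal.coe_lt_top _⟩

/-- Theorem 2 of the paper: let d ≥ 3 and Λ a full-rank unimodular lattice.
Assuming the German–Evdokimov transference theorem with c = d^{1/(2(d-2))} (if the
pseudo-compound P* of a box P contains a nonzero point of Λ*, then cP contains a nonzero
point of Λ), one has ω(Λ) ≥ ω(Λ*)/((d-1)² + d(d-2)ω(Λ*)), interpreted as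
ω(Λ) ≥ 1/(d(d-2)) when ω(Λ*) = ∞. -/
theorem statement13 (d : ℕ) (hd : 3 ≤ d) (B : Module.Basis (Fin d) ℝ (Fin d → ℝ))
    (L : Set (Fin d → ℝ))
    (hL : L = {x | ∃ z : Fin d → ℤ, x = ∑ i, (z i : ℝ) • B i})
    (hdet : |(Matrix.of fun i j => B i j).det| = 1)
    (hGE : ∀ η : Fin d → ℝ, (∀ i, 0 < η i) →
      (∃ y ∈ dualLattice L, y ≠ 0 ∧ ∀ i, |y i| ≤ (∏ j, η j) / η i) →
      ∃ x ∈ L, x ≠ 0 ∧ ∀ i, |x i| ≤ (d : ℝ) ^ ((1 : ℝ) / (2 * ((d : ℝ) - 2))) * η i) :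
    (∀ γ : ℝ, 0 ≤ γ → ((γ : ℝ) : EReal) ≤ omegaExp (dualLattice L) →
      (((γ / (((d : ℝ) - 1) ^ 2 + (d : ℝ) * ((d : ℝ) - 2) * γ)) : ℝ) : EReal) ≤
        omegaExp L) ∧
    (omegaExp (dualLattice L) = ⊤ →
      (((1 / ((d : ℝ) * ((d : ℝ) - 2))) : ℝ) : EReal) ≤ omegaExp L) :=
  statement13_general d hd B L hL hGE
end
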